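/- arXiv:1011.2926 — 3 statements merged into one kernel-verified Lean document; each statement's English description precedes it below -/
import Mathlib

section
/- In a category of fibrant objects, every weak equivalence f : A → B factors as f = p ∘ i, where p : Nf → B is a trivial fibration and i : A → Nf is a section of a trivial fibration (in particular i is a weak equivalence), where Nf = A ×_B B^I is the mapping path-object. -/
/-!
Take a path object `B → PI → B ⨯ B` with structure maps `s`, `(d₀, d₁)`, and let
`N = A ×_B PI` be the pullback of `d₀` along `f`, with `q : N → A` the projection,
`p = d₁ ∘ snd` and `i = (𝟙, s ∘ f)`. Since `s ≫ d₀ = 𝟙`, two-out-of-three makes `d₀`, hence its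
pullback `q`, a trivial fibration, and `i` is a section of `q`. The map `(q, p) : N → A ⨯ B` is
the pullback of `(d₀, d₁)` along `f × 𝟙`, so `p`, its composite with a product projection, is a
fibration. When `f` is a weak equivalence, so are `i` and then `p`, by two-out-of-three.
-/

open CategoryTheory CategoryTheory.Limits

universe v u

/-- A category of fibrant objects in the sense of K. Brown: a category with a terminal
object, equipped with subcategories of fibrations and of weak equivalences, such that
fibrations are closed under composition, contain isomorphisms, are stable under pullback
(pullbacks of fibrations exist), every map to the terminal object is a fibration, weak
equivalences contain isomorphisms and satisfy two-out-of-three, trivial fibrations are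
stable under pullback, and every object has a path object. -/
structure FibrantCategory (C : Type u) [Category.{v} C] [HasBinaryProducts C] where
  /-- fibrations -/
  Fib : MorphismProperty C
  /-- weak equivalences -/
  Weq : MorphismProperty C
  /-- the terminal object -/
  term : C
  isTerminal : IsTerminal term
  fib_comp : ∀ {A B D : C} (f : A ⟶ B) (g : B ⟶ D), Fib f → Fib g → Fib (f ≫ g)
  fib_iso : ∀ {A B : C} (f : A ⟶ B) [IsIso f], Fib f
  weq_iso : ∀ {A B : C} (f : A ⟶ B) [IsIso f], Weq f
  weq_comp : ∀ {A B D : C} (f : A ⟶ B) (g : B ⟶ D), Weq f → Weq g → Weq (f ≫ g)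
  weq_of_comp_left : ∀ {A B D : C} (f : A ⟶ B) (g : B ⟶ D), Weq g → Weq (f ≫ g) → Weq f
  weq_of_comp_right : ∀ {A B D : C} (f : A ⟶ B) (g : B ⟶ D), Weq f → Weq (f ≫ g) → Weq g
  fib_term : ∀ A : C, Fib (isTerminal.from A)
  hasPullback_of_fib : ∀ {A B E : C} (f : A ⟶ B) (p : E ⟶ B), Fib p → HasPullback f p
  fib_pullback : ∀ {A B E : C} (f : A ⟶ B) (p : E ⟶ B) [HasPullback f p],
    Fib p → Fib (pullback.fst f p)
  trivFib_pullback : ∀ {A B E : C} (f : A ⟶ B) (p : E ⟶ B) [HasPullback f p],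
    Fib p → Weq p → Fib (pullback.fst f p) ∧ Weq (pullback.fst f p)
  path : ∀ B : C, ∃ (PI : C) (s : B ⟶ PI) (d₀ d₁ : PI ⟶ B),
    Weq s ∧ Fib (prod.lift d₀ d₁) ∧ s ≫ d₀ = 𝟙 B ∧ s ≫ d₁ = 𝟙 B

theorem isPullback_mappingPathObject {C : Type u} [Category.{v} C] [HasBinaryProducts C]
    {A B PI : C} (f : A ⟶ B) (d₀ d₁ : PI ⟶ B) [HasPullback f d₀] :
    IsPullback (prod.lift (pullback.fst f d₀) (pullback.snd f d₀ ≫ d₁)) (pullback.snd f d₀)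
      (prod.map f (𝟙 B)) (prod.lift d₀ d₁) :=
  IsPullback.of_right (by simpa only [prod.lift_fst] using IsPullback.of_hasPullback f d₀)
    (by ext <;> simp [pullback.condition]) (IsPullback.of_prod_fst_with_id f B)

namespace FibrantCategory

variable {C : Type u} [Category.{v} C] [HasBinaryProducts C] (FC : FibrantCategory C)

theorem fib_of_isPullback {P A E B : C} {fst : P ⟶ A} {snd : P ⟶ E} {f : A ⟶ B} {p : E ⟶ B}
    (h : IsPullback fst snd f p) (hp : FC.Fib p) : FC.Fib fst := by
  have := FC.hasPullback_of_fib f p hp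
  rw [← h.isoPullback_hom_fst]
  exact FC.fib_comp _ _ (FC.fib_iso _) (FC.fib_pullback f p hp)

theorem fib_fst (X Y : C) : FC.Fib (prod.fst : X ⨯ Y ⟶ X) :=
  FC.fib_of_isPullback (IsPullback.of_isLimit_binaryFan_of_isTerminal (prodIsProd X Y)
    FC.isTerminal) (FC.fib_term Y)

theorem fib_snd (X Y : C) : FC.Fib (prod.snd : X ⨯ Y ⟶ Y) :=
  FC.fib_of_isPullback (IsPullback.of_isLimit_binaryFan_of_isTerminal (prodIsProd X Y)
    FC.isTerminal).flip (FC.fib_term X)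

theorem weq_of_comp_eq_id_left {A N : C} {i : A ⟶ N} {q : N ⟶ A} (h : i ≫ q = 𝟙 A)
    (hq : FC.Weq q) : FC.Weq i :=
  FC.weq_of_comp_left i q hq (h ▸ FC.weq_iso _)

theorem weq_of_comp_eq_id_right {A N : C} {i : A ⟶ N} {q : N ⟶ A} (h : i ≫ q = 𝟙 A)
    (hi : FC.Weq i) : FC.Weq q :=
  FC.weq_of_comp_right i q hi (h ▸ FC.weq_iso _)

theorem exists_factorization {A B : C} (f : A ⟶ B) :
    ∃ (N : C) (i : A ⟶ N) (p : N ⟶ B) (q : N ⟶ A),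
      i ≫ p = f ∧ FC.Fib p ∧ FC.Fib q ∧ FC.Weq q ∧ i ≫ q = 𝟙 A := by
  obtain ⟨PI, s, d₀, d₁, hs, hd, hs₀, hs₁⟩ := FC.path B
  have hd₀ : FC.Fib d₀ := by simpa only [prod.lift_fst] using FC.fib_comp _ _ hd (FC.fib_fst B B)
  have := FC.hasPullback_of_fib f d₀ hd₀
  obtain ⟨hq_fib, hq_weq⟩ := FC.trivFib_pullback f d₀ hd₀ (FC.weq_of_comp_eq_id_right hs₀ hs)
  refine ⟨pullback f d₀, pullback.lift (𝟙 A) (f ≫ s) (by simp [hs₀]), pullback.snd f d₀ ≫ d₁,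
    pullback.fst f d₀, by simp [pullback.lift_snd_assoc, hs₁], ?_, hq_fib, hq_weq,
    pullback.lift_fst _ _ _⟩
  have hqp := FC.fib_of_isPullback (isPullback_mappingPathObject f d₀ d₁) hd
  simpa only [prod.lift_snd] using FC.fib_comp _ _ hqp (FC.fib_snd A B)

end FibrantCategory

/-- Brown's Factorization Lemma, specialized to weak equivalences: in a category of fibrant
objects, every weak equivalence `f : A ⟶ B` factors as `f = i ≫ p` where `p` is a trivial
fibration and `i` is a section of a trivial fibration (in particular a weak equivalence). -/
theorem factorization_of_weq {C : Type u} [Category.{v} C] [HasBinaryProducts C]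
    (FC : FibrantCategory C) {A B : C} (f : A ⟶ B) (hf : FC.Weq f) :
    ∃ (N : C) (i : A ⟶ N) (p : N ⟶ B) (q : N ⟶ A),
      i ≫ p = f ∧ FC.Fib p ∧ FC.Weq p ∧ FC.Fib q ∧ FC.Weq q ∧ i ≫ q = 𝟙 A ∧ FC.Weq i := by
  obtain ⟨N, i, p, q, hip, hp, hq_fib, hq_weq, hiq⟩ := FC.exists_factorization f
  have hi : FC.Weq i := FC.weq_of_comp_eq_id_left hiq hq_weq
  exact ⟨N, i, p, q, hip, hp, FC.weq_of_comp_right i p hi (hip ▸ hf), hq_fib, hq_weq, hiq, hi⟩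
end

section
/- Every Schochet fibration of C*-algebras is surjective: if p : E → B is a *-homomorphism such that for all C*-algebras D the induced map Hom(D,E) → Hom(D,B) on morphism spaces is a π₀-fibration, then p is surjective. -/
open unitInterval

/-- the topology of pointwise (norm) convergence on spaces of ⋆-homomorphisms. -/
instance starHomTopology (A B : Type*) [NonUnitalCStarAlgebra A] [NonUnitalCStarAlgebra B] :
    TopologicalSpace (A →⋆ₙₐ[ℂ] B) :=
  TopologicalSpace.induced (fun φ => (φ : A → B)) inferInstance

def IsPi0Fibration {E B : Type*} [TopologicalSpace E] [TopologicalSpace B] (p : E → B) : Prop :=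
  ∀ (h : C(unitInterval, B)) (e : E), p e = h 0 →
    ∃ H : C(unitInterval, E), H 0 = e ∧ ∀ t, p (H t) = h t

/-!
Let `CB = {f ∈ C(I, B) | f 0 = 0}` be the cone over `B`. The evaluations `ev_t : CB → B` form a
path of ⋆-homomorphisms from `ev_0 = 0 = p ∘ 0` to `ev_1`, so the fibration property for `D = CB`
lifts it to a path ending at some `ψ : CB → E` with `p ∘ ψ = ev_1`. Then `ψ (t ↦ t • b)` is a
preimage of `b`. Using the cone over `B` rather than `C₀((0,1])` avoids writing `b` as a
combination of positive contractions.
-/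

theorem IsPi0Fibration.path_one_mem_range {E B : Type*} [TopologicalSpace E] [TopologicalSpace B]
    {p : E → B} (hp : IsPi0Fibration p) (h : C(I, B)) (h₀ : h 0 ∈ Set.range p) :
    h 1 ∈ Set.range p := by
  obtain ⟨e, he⟩ := h₀
  obtain ⟨H, -, hH⟩ := hp h e he
  exact ⟨H 1, hH 1⟩

section Cone

variable (B : Type*) [NonUnitalCStarAlgebra B]

def cone : NonUnitalStarSubalgebra ℂ C(I, B) where
  carrier := {f | f 0 = 0}
  add_mem' hf hg := by simp_all
  zero_mem' := rfl
  mul_mem' hf hg := by simp_all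
  smul_mem' c f hf := by simp_all
  star_mem' hf := by simp_all

-- provides the `NonUnitalCStarAlgebra` instance on `cone B`
instance cone.isClosed : IsClosed (cone B : Set C(I, B)) :=
  isClosed_singleton.preimage (continuous_eval_const (0 : I))

variable {B}

def cone.evalHom (t : I) : cone B →⋆ₙₐ[ℂ] B where
  toFun f := (f : C(I, B)) t
  map_smul' _ _ := rfl
  map_zero' := rfl
  map_add' _ _ := rfl
  map_mul' _ _ := rfl
  map_star' _ := rfl

variable (B) in
def cone.evalPath : C(I, cone B →⋆ₙₐ[ℂ] B) where
  toFun := cone.evalHom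
  continuous_toFun := continuous_induced_rng.2 <|
    continuous_pi fun f => (f : C(I, B)).continuous

noncomputable def cone.ray (b : B) : cone B :=
  ⟨⟨fun t => (t : ℝ) • b, by fun_prop⟩, show ((0 : I) : ℝ) • b = 0 by simp⟩

theorem cone.evalHom_one_ray (b : B) : cone.evalHom 1 (cone.ray b) = b :=
  show ((1 : I) : ℝ) • b = b by simp

end Cone

/-- Every Schochet fibration of C*-algebras is surjective. -/
theorem schochetFibration_surjective {E B : Type u} [NonUnitalCStarAlgebra E]
    [NonUnitalCStarAlgebra B] (p : E →⋆ₙₐ[ℂ] B)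
    (hp : ∀ (D : Type u) [NonUnitalCStarAlgebra D],
      IsPi0Fibration (fun φ : D →⋆ₙₐ[ℂ] E => p.comp φ)) :
    Function.Surjective p := by
  intro b
  have hstart : cone.evalPath B 0 ∈ Set.range (p.comp : (cone B →⋆ₙₐ[ℂ] E) → _) :=
    ⟨0, by ext f; exact (map_zero p).trans f.2.symm⟩
  obtain ⟨ψ, hψ⟩ := (hp (cone B)).path_one_mem_range (cone.evalPath B) hstart
  exact ⟨ψ (cone.ray b), (DFunLike.congr_fun hψ (cone.ray b)).trans (cone.evalHom_one_ray b)⟩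
end

section
/- Given a pointed category of fibrant objects C and a homology theory H on C, declaring the weak equivalences to be the H-equivalences and keeping the same fibrations yields again a pointed category of fibrant objects (with the same path objects). In particular H-equivalences satisfy two-out-of-three and pullbacks of fibrations that are H-equivalences along arbitrary maps are H-equivalences. -/
open CategoryTheory CategoryTheory.Limits

universe v u

universe w

/-- A homology theory on a pointed category of fibrant objects, encoded as a ℤ-graded
family of abelian-group-valued functors (`H n A` plays the role of `H(A, n) = H(Ωⁿ A)`),
which is homotopy invariant and has natural long exact sequences for fibration sequences
(fibre → total space → base). -/
structure HomologyTheory (C : Type u) [Category.{v} C] [HasBinaryProducts C]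
    (FC : FibrantCategory C) (hInit : IsInitial FC.term) where
  /-- the graded homology groups -/
  H : ℤ → C → AddCommGrpCat.{w}
  /-- functoriality -/
  map : ∀ (n : ℤ) {A B : C}, (A ⟶ B) → (H n A ⟶ H n B)
  map_id : ∀ (n : ℤ) (A : C), map n (𝟙 A) = 𝟙 (H n A)
  map_comp : ∀ (n : ℤ) {A B D : C} (f : A ⟶ B) (g : B ⟶ D),
    map n (f ≫ g) = map n f ≫ map n g
  /-- homotopy invariance: weak equivalences induce isomorphisms -/
  weq_iso : ∀ (n : ℤ) {A B : C} (f : A ⟶ B), FC.Weq f → Function.Bijective (map n f)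
  /-- the boundary map of the long exact sequence of a fibration with its fibre -/
  δ : ∀ (n : ℤ) {F E B : C} (i : F ⟶ E) (p : E ⟶ B), FC.Fib p →
    ∀ (hw : i ≫ p = FC.isTerminal.from F ≫ hInit.to B),
      Nonempty (IsLimit (PullbackCone.mk i (FC.isTerminal.from F) hw)) →
        (H n B ⟶ H (n - 1) F)
  exact_E : ∀ (n : ℤ) {F E B : C} (i : F ⟶ E) (p : E ⟶ B) (hp : FC.Fib p)
    (hw : i ≫ p = FC.isTerminal.from F ≫ hInit.to B)
    (hlim : Nonempty (IsLimit (PullbackCone.mk i (FC.isTerminal.from F) hw))),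
    Function.Exact (map n i) (map n p)
  exact_B : ∀ (n : ℤ) {F E B : C} (i : F ⟶ E) (p : E ⟶ B) (hp : FC.Fib p)
    (hw : i ≫ p = FC.isTerminal.from F ≫ hInit.to B)
    (hlim : Nonempty (IsLimit (PullbackCone.mk i (FC.isTerminal.from F) hw))),
    Function.Exact (map n p) (δ n i p hp hw hlim)
  exact_F : ∀ (n : ℤ) {F E B : C} (i : F ⟶ E) (p : E ⟶ B) (hp : FC.Fib p)
    (hw : i ≫ p = FC.isTerminal.from F ≫ hInit.to B)
    (hlim : Nonempty (IsLimit (PullbackCone.mk i (FC.isTerminal.from F) hw))),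
    Function.Exact (δ n i p hp hw hlim) (map (n - 1) i)

/-!
A fibration `p` with fibre `F` gives a long exact sequence
`⋯ → H n F → H n E → H n B → H (n-1) F → ⋯`, so `p` is an `H`-equivalence iff `F` is
`H`-acyclic. A base change of `p` is a fibration with the same fibre (pasting of pullback
squares), hence `H`-equivalences that are fibrations are stable under base change. The remaining
axioms are inherited: two-out-of-three holds because `H n` is functorial, and path objects stay
path objects because weak equivalences are `H`-equivalences.
-/

lemma FibrantCategory.exists_isPullback_fibre {C : Type u} [Category.{v} C] [HasBinaryProducts C]
    (FC : FibrantCategory C) (hInit : IsInitial FC.term) {E B : C} {p : E ⟶ B}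
    (hp : FC.Fib p) :
    ∃ (F : C) (i : F ⟶ E), IsPullback i (FC.isTerminal.from F) p (hInit.to B) := by
  have := FC.hasPullback_of_fib (hInit.to B) p hp
  refine ⟨pullback (hInit.to B) p, pullback.snd _ _, ?_⟩
  simpa only [FC.isTerminal.hom_ext (pullback.fst _ _) (FC.isTerminal.from _)] using
    (IsPullback.of_hasPullback (hInit.to B) p).flip

namespace HomologyTheory

variable {C : Type u} [Category.{v} C] [HasBinaryProducts C] {FC : FibrantCategory C}
  {hInit : IsInitial FC.term} (HT : HomologyTheory.{v, u, w} C FC hInit)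

def IsEquivalence {A B : C} (f : A ⟶ B) : Prop :=
  ∀ n : ℤ, Function.Bijective (HT.map n f)

def IsAcyclic (F : C) : Prop :=
  ∀ (n : ℤ) (x : HT.H n F), x = 0

lemma coe_map_comp (n : ℤ) {A B D : C} (f : A ⟶ B) (g : B ⟶ D) :
    ⇑(HT.map n (f ≫ g)) = ⇑(HT.map n g) ∘ ⇑(HT.map n f) := by
  rw [HT.map_comp]
  rfl

lemma isEquivalence_of_isIso {A B : C} (f : A ⟶ B) [IsIso f] : HT.IsEquivalence f := by
  intro n
  refine Function.bijective_iff_has_inverse.mpr ⟨HT.map n (inv f), fun x => ?_, fun y => ?_⟩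
  · rw [← Function.comp_apply (f := HT.map n (inv f)), ← coe_map_comp, IsIso.hom_inv_id,
      HT.map_id, AddCommGrpCat.id_apply]
  · rw [← Function.comp_apply (f := HT.map n f), ← coe_map_comp, IsIso.inv_hom_id,
      HT.map_id, AddCommGrpCat.id_apply]

variable {HT} in
lemma IsEquivalence.comp {A B D : C} {f : A ⟶ B} {g : B ⟶ D} (hf : HT.IsEquivalence f)
    (hg : HT.IsEquivalence g) : HT.IsEquivalence (f ≫ g) := fun n => by
  rw [coe_map_comp]
  exact (hg n).comp (hf n)

lemma isEquivalence_of_comp_left {A B D : C} (f : A ⟶ B) (g : B ⟶ D)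
    (hg : HT.IsEquivalence g) (hfg : HT.IsEquivalence (f ≫ g)) : HT.IsEquivalence f :=
  fun n => (Function.Bijective.of_comp_iff' (hg n) _).mp (HT.coe_map_comp n f g ▸ hfg n)

lemma isEquivalence_of_comp_right {A B D : C} (f : A ⟶ B) (g : B ⟶ D)
    (hf : HT.IsEquivalence f) (hfg : HT.IsEquivalence (f ≫ g)) : HT.IsEquivalence g :=
  fun n => (Function.Bijective.of_comp_iff _ (hf n)).mp (HT.coe_map_comp n f g ▸ hfg n)

section Fibre

variable {F E B : C} {i : F ⟶ E} {p : E ⟶ B} (hp : FC.Fib p)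
  (hF : IsPullback i (FC.isTerminal.from F) p (hInit.to B))
include hp hF

lemma isAcyclic_of_isEquivalence (hpe : HT.IsEquivalence p) : HT.IsAcyclic F := by
  suffices ∀ (n : ℤ) (x : HT.H (n - 1) F), x = 0 from
    fun n => add_sub_cancel_right n 1 ▸ this (n + 1)
  intro n x
  have hix : HT.map (n - 1) i x = 0 :=
    (hpe (n - 1)).1 (by simpa using (HT.exact_E _ i p hp hF.w hF.isLimit').apply_apply_eq_zero x)
  obtain ⟨y, rfl⟩ := (HT.exact_F n i p hp hF.w hF.isLimit' x).mp hix
  obtain ⟨z, rfl⟩ := (hpe n).2 y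
  exact (HT.exact_B n i p hp hF.w hF.isLimit').apply_apply_eq_zero z

lemma isEquivalence_of_isAcyclic (hFa : HT.IsAcyclic F) : HT.IsEquivalence p := by
  intro n
  refine ⟨fun a b hab => ?_, fun b => (HT.exact_B n i p hp hF.w hF.isLimit' b).mp (hFa _ _)⟩
  obtain ⟨y, hy⟩ := (HT.exact_E n i p hp hF.w hF.isLimit' (a - b)).mp
    (by rw [map_sub, hab, sub_self])
  rw [hFa n y, map_zero] at hy
  exact sub_eq_zero.mp hy.symm

end Fibre

lemma isEquivalence_pullback_fst {A B E : C} (f : A ⟶ B) {p : E ⟶ B} [HasPullback f p]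
    (hp : FC.Fib p) (hpe : HT.IsEquivalence p) : HT.IsEquivalence (pullback.fst f p) := by
  obtain ⟨F, i, hF⟩ := FC.exists_isPullback_fibre hInit hp
  have hF' : IsPullback i (FC.isTerminal.from F) p (hInit.to A ≫ f) := by
    rwa [hInit.hom_ext (hInit.to A ≫ f) (hInit.to B)]
  exact HT.isEquivalence_of_isAcyclic (FC.fib_pullback f p hp)
    (hF'.of_right' (IsPullback.of_hasPullback f p).flip)
    (HT.isAcyclic_of_isEquivalence hp hF hpe)

def fibrantCategory : FibrantCategory C where
  Fib := FC.Fib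
  Weq := fun _ _ f => HT.IsEquivalence f
  term := FC.term
  isTerminal := FC.isTerminal
  fib_comp := FC.fib_comp
  fib_iso := FC.fib_iso
  weq_iso := HT.isEquivalence_of_isIso
  weq_comp _ _ := IsEquivalence.comp
  weq_of_comp_left := HT.isEquivalence_of_comp_left
  weq_of_comp_right := HT.isEquivalence_of_comp_right
  fib_term := FC.fib_term
  hasPullback_of_fib := FC.hasPullback_of_fib
  fib_pullback := FC.fib_pullback
  trivFib_pullback f _ _ hp hpe := ⟨FC.fib_pullback f _ hp, HT.isEquivalence_pullback_fst f hp hpe⟩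
  path B := by
    obtain ⟨PI, s, d₀, d₁, hs, hfib, h₀, h₁⟩ := FC.path B
    exact ⟨PI, s, d₀, d₁, fun n => HT.weq_iso n s hs, hfib, h₀, h₁⟩

end HomologyTheory

/-- Given a pointed category of fibrant objects `C` and a homology theory `HT` on it,
taking the `H`-equivalences as the weak equivalences, keeping the same fibrations and
terminal (= zero) object, yields again a category of fibrant objects.  In particular
`H`-equivalences satisfy two-out-of-three, and the pullback of a fibration which is an
`H`-equivalence along an arbitrary morphism is again an `H`-equivalence. -/
theorem localized_fibrantCategory {C : Type u} [Category.{v} C] [HasBinaryProducts C]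
    (FC : FibrantCategory C) (hInit : IsInitial FC.term)
    (HT : HomologyTheory.{v, u, w} C FC hInit) :
    ∃ FC' : FibrantCategory C,
      FC'.Fib = FC.Fib ∧ FC'.term = FC.term ∧
        FC'.Weq = (fun _ _ f => ∀ n : ℤ, Function.Bijective (HT.map n f) :
          MorphismProperty C) :=
  ⟨HT.fibrantCategory, rfl, rfl, rfl⟩
end
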